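/- arXiv:2510.15209 — 10 statements merged into one kernel-verified Lean document; each statement's English description precedes it below -/
import Mathlib

section
/- Let S be a numerical semigroup and let d be a nonzero element of S. Then there exists a matrix A ∈ M_d(ℚ) such that S(A) = S. In particular, the matricial dimension of S is at most the multiplicity m(S) = min(S \ {0}). -/
/-- The exponent set of a rational square matrix: those `n` with the `n`-th power integral. -/
def expSet {ι : Type*} [Fintype ι] [DecidableEq ι] (A : Matrix ι ι ℚ) : Set ℕ :=
  {n | ∀ i j, ((A ^ n) i j).den = 1}

/-- The matricial dimension of a set `S ⊆ ℕ`. -/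
noncomputable def matricialDim (S : Set ℕ) : ℕ :=
  sInf {d | ∃ A : Matrix (Fin d) (Fin d) ℚ, expSet A = S}

/-!
Let `w r` be the least element of `S` congruent to `r` modulo `d`, so that `{w 0, …, w (d-1)}`
is the Apéry set of `S` with respect to `d`. The cyclic shift `A` with
`A (i, i+1) = 2 ^ (1 + w i - w (i+1))` has `Aⁿ (i, i+n) = 2 ^ (n + w i - w (i+n))` by telescoping,
and no other nonzero entries, so `Aⁿ` is integral iff `w (i+n) ≤ n + w i` for all `i`.
For `n ∈ S` this holds since `n + w i ∈ S` lies in the class of `i + n`; conversely `i = 0` gives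
`w n ≤ n`, and `n - w n` is a multiple of `d ∈ S`. Applying this to the multiplicity bounds the
matricial dimension.
-/

open Fin.NatCast

theorem den_two_zpow_eq_one_iff (z : ℤ) : ((2 : ℚ) ^ z).den = 1 ↔ 0 ≤ z := by
  refine ⟨fun h => ?_, fun hz => ?_⟩
  · by_contra! hz
    obtain ⟨k, rfl⟩ := Int.eq_negSucc_of_lt_zero hz
    rw [zpow_negSucc, ← Nat.cast_ofNat, ← Nat.cast_pow,
      Rat.inv_natCast_den_of_pos (by positivity)] at h
    exact absurd h (Nat.one_lt_two_pow k.succ_ne_zero).ne'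
  · lift z to ℕ using hz
    rw [zpow_natCast, ← Nat.cast_ofNat, ← Nat.cast_pow]
    exact Rat.den_natCast _

section CyclicShift

variable {d : ℕ} [NeZero d]

def cyclicShiftMatrix (w : Fin d → ℤ) : Matrix (Fin d) (Fin d) ℚ :=
  Matrix.of fun i j => if j = i + 1 then (2 : ℚ) ^ (1 + w i - w j) else 0

theorem cyclicShiftMatrix_pow (w : Fin d → ℤ) (n : ℕ) :
    cyclicShiftMatrix w ^ n =
      Matrix.of fun i j : Fin d => if j = i + n then (2 : ℚ) ^ (n + w i - w j) else 0 := by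
  induction n with
  | zero =>
    ext i j
    rcases eq_or_ne i j with rfl | hij
    · simp
    · simp [hij, hij.symm]
  | succ n ih =>
    ext i j
    rw [pow_succ, ih, Matrix.mul_apply]
    simp only [Matrix.of_apply, ite_mul, zero_mul]
    rw [Finset.sum_ite_eq' Finset.univ (i + n)]
    simp only [Finset.mem_univ, if_true, cyclicShiftMatrix, Matrix.of_apply, mul_ite, mul_zero,
      Nat.cast_succ, ← add_assoc]
    split_ifs
    · rw [← zpow_add₀ two_ne_zero]
      ring_nf
    · rfl

theorem expSet_cyclicShiftMatrix (w : Fin d → ℤ) :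
    expSet (cyclicShiftMatrix w) = {n : ℕ | ∀ i, w (i + n) ≤ n + w i} := by
  ext n
  simp only [expSet, cyclicShiftMatrix_pow, Matrix.of_apply, Set.mem_ofPred_eq]
  refine ⟨fun h i => ?_, fun h i j => ?_⟩
  · have := h i (i + n)
    rw [if_pos rfl, den_two_zpow_eq_one_iff] at this
    linarith
  · split_ifs with hj
    · rw [den_two_zpow_eq_one_iff, hj]
      linarith [h i]
    · rfl

end CyclicShift

namespace AddSubmonoid

variable (S : AddSubmonoid ℕ) (d : ℕ)

/-- Junk value `sInf ∅ = 0` when `S` misses the residue class of `r`. -/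
noncomputable def apery (r : ℕ) : ℕ :=
  sInf {s | s ∈ S ∧ s ≡ r [MOD d]}

variable {S d}

theorem apery_le {r s : ℕ} (hs : s ∈ S) (hsr : s ≡ r [MOD d]) : S.apery d r ≤ s :=
  Nat.sInf_le ⟨hs, hsr⟩

theorem apery_mem_modEq {r : ℕ} (hr : ∃ s ∈ S, s ≡ r [MOD d]) :
    S.apery d r ∈ S ∧ S.apery d r ≡ r [MOD d] :=
  Nat.sInf_mem hr

theorem apery_zero : S.apery d 0 = 0 :=
  Nat.le_zero.mp (apery_le S.zero_mem rfl)

theorem apery_congr {r r' : ℕ} (h : r ≡ r' [MOD d]) : S.apery d r = S.apery d r' := by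
  have hset : {s | s ∈ S ∧ s ≡ r [MOD d]} = {s | s ∈ S ∧ s ≡ r' [MOD d]} := by
    ext s
    exact and_congr_right fun _ => ⟨fun hs => hs.trans h, fun hs => hs.trans h.symm⟩
  rw [apery, apery, hset]

theorem mem_of_apery_le {n : ℕ} (hd : d ∈ S) (hn : ∃ s ∈ S, s ≡ n [MOD d])
    (hle : S.apery d n ≤ n) : n ∈ S := by
  obtain ⟨hmem, hmod⟩ := apery_mem_modEq hn
  obtain ⟨k, hk⟩ := exists_eq_mul_left_of_dvd ((Nat.modEq_iff_dvd' hle).mp hmod)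
  rw [← Nat.add_sub_cancel' hle, hk, ← smul_eq_mul]
  exact S.add_mem hmem (S.nsmul_mem hd k)

theorem apery_add_le {n r : ℕ} (hn : n ∈ S) (hr : ∃ s ∈ S, s ≡ r [MOD d]) :
    S.apery d (r + n) ≤ n + S.apery d r := by
  obtain ⟨hmem, hmod⟩ := apery_mem_modEq hr
  exact apery_le (S.add_mem hn hmem) ((hmod.add_left n).trans (by rw [Nat.add_comm]))

theorem mem_iff_forall_apery_add_le [NeZero d] (hd : d ∈ S)
    (hres : ∀ r, ∃ s ∈ S, s ≡ r [MOD d]) {n : ℕ} :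
    n ∈ S ↔ ∀ i : Fin d, S.apery d (i + n) ≤ n + S.apery d i := by
  refine ⟨fun hn i => apery_add_le hn (hres i), fun h => mem_of_apery_le hd (hres n) ?_⟩
  simpa [apery_zero] using h 0

theorem exists_mem_modEq_of_compl_finite (hS : (S : Set ℕ)ᶜ.Finite) (hd0 : d ≠ 0) (r : ℕ) :
    ∃ s ∈ S, s ≡ r [MOD d] := by
  rw [← Filter.mem_cofinite, Nat.cofinite_eq_atTop, Filter.mem_atTop_sets] at hS
  obtain ⟨N, hN⟩ := hS
  refine ⟨r + d * N, hN _ ?_, Nat.add_mul_mod_self_left r d N⟩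
  nlinarith [Nat.one_le_iff_ne_zero.mpr hd0]

theorem exists_expSet_eq [NeZero d] (hd : d ∈ S) (hres : ∀ r, ∃ s ∈ S, s ≡ r [MOD d]) :
    ∃ A : Matrix (Fin d) (Fin d) ℚ, expSet A = S := by
  refine ⟨cyclicShiftMatrix fun i => (S.apery d i : ℤ), ?_⟩
  ext n
  rw [expSet_cyclicShiftMatrix, Set.mem_ofPred_eq, SetLike.mem_coe,
    S.mem_iff_forall_apery_add_le hd hres]
  refine forall_congr' fun i => ?_
  have hval : ((i + n : Fin d) : ℕ) ≡ i + n [MOD d] := by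
    rw [Fin.val_add, Fin.val_natCast]
    exact (Nat.mod_modEq _ d).trans ((Nat.mod_modEq n d).add_left i)
  rw [S.apery_congr hval]
  exact_mod_cast Iff.rfl

end AddSubmonoid

theorem exists_representing_matrix (S : AddSubmonoid ℕ)
    (hS : (↑S : Set ℕ)ᶜ.Finite) (d : ℕ) (hd : d ∈ S) (hd0 : d ≠ 0) :
    (∃ A : Matrix (Fin d) (Fin d) ℚ, expSet A = (S : Set ℕ)) ∧
    matricialDim (S : Set ℕ) ≤ sInf {n : ℕ | n ∈ S ∧ n ≠ 0} := by
  have representable (m : ℕ) (hm : m ∈ S) (hm0 : m ≠ 0) :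
      ∃ A : Matrix (Fin m) (Fin m) ℚ, expSet A = (S : Set ℕ) :=
    haveI : NeZero m := ⟨hm0⟩
    S.exists_expSet_eq hm (S.exists_mem_modEq_of_compl_finite hS hm0)
  have hmult := Nat.sInf_mem (s := {n : ℕ | n ∈ S ∧ n ≠ 0}) ⟨d, hd, hd0⟩
  exact ⟨representable d hd hd0, Nat.sInf_le (representable _ hmult.1 hmult.2)⟩
end

section
/- Let S₁,…,S_k be numerical semigroups, let S = ⋂ᵢ Sᵢ, and suppose dᵢ ∈ Sᵢ \ {0} for each i. Then there exists a rational square matrix A of size d₁ + d₂ + ⋯ + d_k with S(A) = S; hence the matricial dimension of S is at most d₁ + ⋯ + d_k. -/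
open Matrix


lemma den_two_zpow (m : ℤ) : ((2:ℚ) ^ m).den = 1 ↔ 0 ≤ m := by
  rcases le_or_gt 0 m with h | h
  · refine ⟨fun _ => h, fun _ => ?_⟩
    obtain ⟨k, rfl⟩ := Int.eq_ofNat_of_zero_le h
    rw [zpow_natCast]
    have : (2:ℚ) ^ k = ((2 ^ k : ℕ) : ℚ) := by push_cast; ring
    rw [this, ← Rat.den_intCast (2 ^ k : ℕ)]
    norm_cast
  · constructor
    · intro hden
      exfalso
      obtain ⟨k, rfl⟩ : ∃ k : ℕ, m = -((k : ℤ) + 1) := ⟨(-m - 1).toNat, by omega⟩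
      rw [_root_.zpow_neg] at hden
      have h1 : (2:ℚ) ^ ((k:ℤ) + 1) = ((2 ^ (k+1) : ℕ) : ℚ) := by
        push_cast
        rw [← zpow_natCast (2:ℚ) (k+1)]
        push_cast
        ring
      rw [h1, Rat.inv_natCast_den] at hden
      have h2 : 2 ^ (k+1) ≠ 0 := by positivity
      rw [if_neg h2] at hden
      have : 2 ≤ 2 ^ (k+1) := Nat.one_lt_two_pow_iff.mpr (by omega)
      omega
    · intro h; omega

lemma exists_matrix_of_mem (S : AddSubmonoid ℕ) (hS : ((S : Set ℕ))ᶜ.Finite)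
    (d : ℕ) (hdS : d ∈ S) (hd0 : d ≠ 0) :
    ∃ A : Matrix (Fin d) (Fin d) ℚ, expSet A = S := by
  have hd : 0 < d := Nat.pos_of_ne_zero hd0
  set w : ℕ → ℕ := fun r => sInf {s : ℕ | s ∈ S ∧ s % d = r} with hwdef
  have hne : ∀ r, r < d → {s : ℕ | s ∈ S ∧ s % d = r}.Nonempty := by
    intro r hr
    have hinf : {s : ℕ | s % d = r}.Infinite := by
      apply Set.infinite_of_injective_forall_mem (f := fun k : ℕ => r + d * k)
      · intro a b hab
        simp only at hab
        exact Nat.eq_of_mul_eq_mul_left hd (by omega)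
      · intro k
        simp [Nat.add_mul_mod_self_left, Nat.mod_eq_of_lt hr]
    obtain ⟨s, hs1, hs2⟩ := (hinf.diff hS).nonempty
    exact ⟨s, by simpa using hs2, hs1⟩
  have hmem : ∀ r, r < d → w r ∈ S ∧ w r % d = r := fun r hr => Nat.sInf_mem (hne r hr)
  have hle : ∀ {r s : ℕ}, s ∈ S → s % d = r → w r ≤ s := fun h1 h2 => Nat.sInf_le ⟨h1, h2⟩
  have hw0 : w 0 = 0 := Nat.le_zero.mp (hle S.zero_mem (Nat.zero_mod d))
  have key : ∀ n : ℕ, (∀ i, i < d → ((w ((i + n) % d) : ℤ) ≤ (w i : ℤ) + n)) ↔ n ∈ S := by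
    intro n
    constructor
    · intro h
      have h0 := h 0 hd
      rw [hw0, Nat.zero_add] at h0
      push_cast at h0
      have hwn : w (n % d) ≤ n := by omega
      obtain ⟨hw1, hw2⟩ := hmem (n % d) (Nat.mod_lt n hd)
      have hdvd : d ∣ n - w (n % d) := (Nat.modEq_iff_dvd' hwn).mp hw2
      obtain ⟨q, hq⟩ := hdvd
      have hnq : n = w (n % d) + d * q := by
        rw [← hq, Nat.add_sub_cancel' hwn]
      rw [hnq]
      refine S.add_mem hw1 ?_
      have := AddSubmonoid.nsmul_mem S hdS q
      simpa [smul_eq_mul, mul_comm] using this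
    · intro hn i hi
      have hmod : (w i + n) % d = (i + n) % d := by
        rw [Nat.add_mod (w i) n, (hmem i hi).2, Nat.add_mod_mod]
      have := hle (S.add_mem (hmem i hi).1 hn) hmod
      omega
  set A : Matrix (Fin d) (Fin d) ℚ := fun i j =>
    if (j : ℕ) = ((i : ℕ) + 1) % d then
      (2:ℚ) ^ ((w (i : ℕ) : ℤ) - (w (((i : ℕ) + 1) % d) : ℤ) + 1) else 0 with hA
  have hpow : ∀ n (i j : Fin d), (A ^ n) i j =
      if (j : ℕ) = ((i : ℕ) + n) % d then
        (2:ℚ) ^ ((w (i : ℕ) : ℤ) - (w (((i : ℕ) + n) % d) : ℤ) + n) else 0 := by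
    intro n
    induction n with
    | zero =>
      intro i j
      rw [pow_zero]
      have hi : (i : ℕ) % d = (i : ℕ) := Nat.mod_eq_of_lt i.isLt
      rcases eq_or_ne i j with rfl | hij
      · rw [Matrix.one_apply_eq]
        simp [hi]
      · rw [Matrix.one_apply_ne hij]
        rw [if_neg]
        simp only [Nat.add_zero, hi]
        exact fun hc => hij (Fin.ext hc).symm
    | succ n ih =>
      intro i j
      rw [pow_succ, Matrix.mul_apply]
      have hm : ((i : ℕ) + n) % d < d := Nat.mod_lt _ hd
      have hAapp : ∀ (a b : Fin d), A a b =
          if (b : ℕ) = ((a : ℕ) + 1) % d then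
            (2:ℚ) ^ ((w (a : ℕ) : ℤ) - (w (((a : ℕ) + 1) % d) : ℤ) + 1) else 0 := fun a b => rfl
      rw [Finset.sum_eq_single (⟨((i : ℕ) + n) % d, hm⟩ : Fin d)]
      · rw [ih, if_pos rfl, hAapp]
        rw [show ((⟨((i : ℕ) + n) % d, hm⟩ : Fin d) : ℕ) = ((i : ℕ) + n) % d from rfl]
        have hc : ((((i:ℕ) + n) % d) + 1) % d = ((i:ℕ) + (n+1)) % d := by
          rw [Nat.mod_add_mod]
          ring_nf
        rw [hc]
        by_cases hj : (j : ℕ) = ((i:ℕ) + (n+1)) % d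
        · rw [if_pos hj, if_pos hj, ← zpow_add₀ (by norm_num : (2:ℚ) ≠ 0)]
          congr 1
          push_cast
          ring
        · rw [if_neg hj, if_neg hj, mul_zero]
      · intro b _ hb
        rw [ih, if_neg, zero_mul]
        intro hc
        exact hb (Fin.ext hc)
      · intro habs
        exact absurd (Finset.mem_univ _) habs
  refine ⟨A, ?_⟩
  ext n
  simp only [expSet, Set.mem_setOf_eq, SetLike.mem_coe]
  rw [← key n]
  constructor
  · intro h i hi
    have := h ⟨i, hi⟩ ⟨(i + n) % d, Nat.mod_lt _ hd⟩
    rw [hpow] at this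
    rw [show ((⟨i, hi⟩ : Fin d) : ℕ) = i from rfl,
      show ((⟨(i + n) % d, Nat.mod_lt _ hd⟩ : Fin d) : ℕ) = (i + n) % d from rfl] at this
    rw [if_pos rfl, den_two_zpow] at this
    omega
  · intro h i j
    rw [hpow]
    by_cases hj : (j : ℕ) = ((i : ℕ) + n) % d
    · rw [if_pos hj, den_two_zpow]
      have := h (i : ℕ) i.isLt
      omega
    · rw [if_neg hj]
      rfl

theorem expSet_intersection (k : ℕ) (S : Fin k → AddSubmonoid ℕ)
    (hS : ∀ i, ((S i : Set ℕ))ᶜ.Finite) (d : Fin k → ℕ)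
    (hd : ∀ i, d i ∈ S i) (hd0 : ∀ i, d i ≠ 0) :
    (∃ A : Matrix (Fin (∑ i, d i)) (Fin (∑ i, d i)) ℚ,
      expSet A = ⋂ i, (S i : Set ℕ)) ∧
    matricialDim (⋂ i, (S i : Set ℕ)) ≤ ∑ i, d i := by
  have hex : ∃ A : Matrix (Fin (∑ i, d i)) (Fin (∑ i, d i)) ℚ,
      expSet A = ⋂ i, (S i : Set ℕ) := by
    choose A hA using fun i => exists_matrix_of_mem (S i) (hS i) (d i) (hd i) (hd0 i)
    have e : (Σ i : Fin k, Fin (d i)) ≃ Fin (∑ i, d i) :=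
      Fintype.equivFinOfCardEq (by simp)
    refine ⟨(Matrix.reindexAlgEquiv ℚ ℚ e) (Matrix.blockDiagonal' A), ?_⟩
    ext n
    simp only [expSet, Set.mem_setOf_eq, Set.mem_iInter, SetLike.mem_coe]
    have hBn : ((Matrix.reindexAlgEquiv ℚ ℚ e) (Matrix.blockDiagonal' A)) ^ n =
        (Matrix.reindexAlgEquiv ℚ ℚ e) (Matrix.blockDiagonal' (fun i => A i ^ n)) := by
      rw [← map_pow]
      congr 1
      rw [← Matrix.blockDiagonal'_pow]
      rfl
    constructor
    · intro h i
      rw [← SetLike.mem_coe, ← hA i]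
      intro a b
      have := h (e ⟨i, a⟩) (e ⟨i, b⟩)
      rw [hBn] at this
      simpa [Matrix.reindexAlgEquiv_apply, Matrix.reindex_apply, Matrix.submatrix_apply,
        Equiv.symm_apply_apply] using this
    · intro h p q
      rw [hBn]
      simp only [Matrix.reindexAlgEquiv_apply, Matrix.reindex_apply, Matrix.submatrix_apply]
      obtain ⟨i, a⟩ := e.symm p
      obtain ⟨j, b⟩ := e.symm q
      by_cases hij : i = j
      · subst hij
        rw [Matrix.blockDiagonal'_apply_eq]
        have hi := h i
        rw [← SetLike.mem_coe, ← hA i] at hi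
        exact hi a b
      · rw [Matrix.blockDiagonal'_apply_ne _ _ _ hij]
        rfl
  refine ⟨hex, Nat.sInf_le hex⟩
end

section
/- For every integer a ≥ 2 there exists a 2×2 rational matrix A such that S(A) = ⟨a⟩ = {0, a, 2a, 3a, …}, the cyclic numerical subsemigroup generated by a. Concretely, if p is a prime with p ≡ 1 (mod a) and z is an integer whose multiplicative order modulo p is a, then A = [[z, (z−1)/p],[0, 1]] satisfies Aⁿ ∈ M₂(ℤ) if and only if a ∣ n. -/
lemma pow_formula (z : ℤ) (p : ℕ) (hp : (p : ℚ) ≠ 0) (n : ℕ) :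
    (!![(z : ℚ), ((z : ℚ) - 1) / p; 0, 1]) ^ n
      = !![(z : ℚ) ^ n, ((z : ℚ) ^ n - 1) / p; 0, 1] := by
  induction n with
  | zero => simp [Matrix.one_fin_two]
  | succ n ih =>
    rw [pow_succ, ih, Matrix.mul_fin_two]
    ext i j
    fin_cases i <;> fin_cases j <;> simp [pow_succ] <;> field_simp <;> ring

lemma key (p : ℕ) (hp : p.Prime) (z : ℤ) (a : ℕ) (horder : orderOf (z : ZMod p) = a)
    (n : ℕ) : n ∈ expSet (!![(z : ℚ), ((z : ℚ) - 1) / p; 0, 1]) ↔ a ∣ n := by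
  have hp0 : (p : ℚ) ≠ 0 := by exact_mod_cast hp.ne_zero
  have hpz : (p : ℤ) ≠ 0 := by exact_mod_cast hp.ne_zero
  have hmem : n ∈ expSet (!![(z : ℚ), ((z : ℚ) - 1) / p; 0, 1]) ↔
      (((z ^ n - 1 : ℤ) : ℚ) / (p : ℚ)).den = 1 := by
    simp only [expSet, Set.mem_setOf_eq, pow_formula z p hp0 n, Fin.forall_fin_two]
    push_cast
    simp [Matrix.cons_val_zero, Matrix.cons_val_one]
  have hcast : ((p : ℚ)) = ((p : ℤ) : ℚ) := by push_cast; rfl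
  rw [hmem, hcast, Rat.den_div_intCast_eq_one_iff _ _ hpz]
  have : (p : ℤ) ∣ z ^ n - 1 ↔ ((z ^ n - 1 : ℤ) : ZMod p) = 0 :=
    (ZMod.intCast_zmod_eq_zero_iff_dvd _ _).symm
  rw [this]
  push_cast
  rw [sub_eq_zero, ← horder]
  exact orderOf_dvd_iff_pow_eq_one.symm

theorem cyclic_semigroup_dim_two (a : ℕ) (ha : 2 ≤ a) :
    (∃ A : Matrix (Fin 2) (Fin 2) ℚ, expSet A = {n : ℕ | a ∣ n}) ∧
    ∀ (p : ℕ) (_ : p.Prime) (_ : p ≡ 1 [MOD a]) (z : ℤ)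
      (_ : orderOf (z : ZMod p) = a),
      ∀ n : ℕ,
        n ∈ expSet (!![(z : ℚ), ((z : ℚ) - 1) / p; 0, 1]) ↔ a ∣ n := by
  constructor
  · -- existence: get a prime p ≡ 1 mod a and an element of order a
    obtain ⟨p, hp, hpa, hp1⟩ := Nat.exists_prime_gt_modEq_one (k := a) a (by omega)
    haveI : Fact p.Prime := ⟨hp⟩
    have hdvd : a ∣ p - 1 := by
      have : 1 ≤ p := hp.one_lt.le
      have h1 : 1 % a = 1 := Nat.mod_eq_of_lt (by omega)
      exact (Nat.modEq_iff_dvd' this).mp hp1.symm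
    obtain ⟨g, hg⟩ : ∃ g : (ZMod p)ˣ, orderOf g = p - 1 := by
      obtain ⟨g, hg⟩ := IsCyclic.exists_ofOrder_eq_natCard (α := (ZMod p)ˣ)
      exact ⟨g, by rwa [Nat.card_eq_fintype_card, ZMod.card_units_eq_totient,
        Nat.totient_prime hp] at hg⟩
    set u : (ZMod p)ˣ := g ^ ((p - 1) / a) with hu
    have hp1pos : 0 < p - 1 := by omega
    have hord : orderOf u = a := by
      rw [hu, orderOf_pow, hg, Nat.gcd_eq_right (Nat.div_dvd_of_dvd hdvd),
        Nat.div_div_self hdvd (by omega)]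
    set z : ℤ := ((u : ZMod p).val : ℤ) with hz
    have hcast : (z : ZMod p) = (u : ZMod p) := by
      rw [hz]; push_cast; simp [ZMod.natCast_val, ZMod.cast_id]
    have horder : orderOf (z : ZMod p) = a := by
      rw [hcast, orderOf_units, hord]
    exact ⟨_, Set.ext fun n => key p hp z a horder n⟩
  · intro p hp _ z horder n
    exact key p hp z a horder n
end

section
/- For every integer b ≥ 2 and prime p, the matrix A = [[p², (p−1)·p^{1−b}],[0, p]] ∈ M₂(ℚ) satisfies Aⁿ = [[p^{2n}, p^{n−b}(pⁿ−1)],[0, pⁿ]] for all n ≥ 1, and hence S(A) = {0} ∪ {n ∈ ℕ : n ≥ b}, the ordinary numerical semigroup S_b. -/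
/-! The top-right entry of `!![a, c; 0, d] ^ n` is `c * ∑ aⁱ dⁿ⁻¹⁻ⁱ`, which for `a = p²`, `d = p`
collapses by the geometric sum to `p ^ (n - b) * (pⁿ - 1)`. For `n ≥ 1` the factor `pⁿ - 1` is
prime to `p`, so this entry is integral exactly when `n ≥ b`; the diagonal entries always are. -/

open Finset

theorem Matrix.upperTriangular_fin_two_pow {R : Type*} [CommRing R] (a c d : R) (n : ℕ) :
    !![a, c; 0, d] ^ n = !![a ^ n, c * ∑ i ∈ range n, a ^ i * d ^ (n - 1 - i); 0, d ^ n] := by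
  induction n with
  | zero => simp [Matrix.one_fin_two]
  | succ n ih =>
    rw [pow_succ, ih, Matrix.mul_fin_two, add_tsub_cancel_right, geom_sum₂_succ_eq]
    simp only [mul_zero, add_zero, zero_mul, zero_add]
    ring_nf

theorem not_dvd_pow_self_sub_one {R : Type*} [CommRing R] {p : R} (hp : ¬ IsUnit p) {n : ℕ}
    (hn : n ≠ 0) : ¬ p ∣ p ^ n - 1 := fun h =>
  hp (isUnit_of_dvd_one (by simpa using dvd_sub (dvd_pow_self p hn) h))

theorem Rat.den_zpow_mul_intCast_eq_one_iff {p : ℕ} (hp : p ≠ 0) {m : ℤ} (hm : ¬ (p : ℤ) ∣ m)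
    (k : ℤ) : ((p : ℚ) ^ k * m).den = 1 ↔ 0 ≤ k := by
  constructor
  · intro h
    by_contra! hk
    obtain ⟨j, rfl⟩ : ∃ j : ℕ, k = -j := ⟨k.natAbs, by omega⟩
    have hq := (Rat.den_eq_one_iff _).mp h
    refine hm ((dvd_pow_self _ (by omega : j ≠ 0)).trans ⟨((p : ℚ) ^ (-(j : ℤ)) * m).num, ?_⟩)
    have hp' : (p : ℚ) ≠ 0 := by exact_mod_cast hp
    have hm_eq : (m : ℚ) = p ^ j * ((p : ℚ) ^ (-(j : ℤ)) * m).num := by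
      rw [hq, zpow_neg, zpow_natCast, mul_inv_cancel_left₀ (pow_ne_zero _ hp')]
    exact_mod_cast hm_eq
  · intro hk
    lift k to ℕ using hk
    simpa using Rat.den_intCast ((p : ℤ) ^ k * m)

theorem ordinary_semigroup_dim_two_general (b : ℕ) (p : ℕ) (hp : p.Prime) :
    (∀ n : ℕ, 1 ≤ n →
      (!![(p : ℚ) ^ 2, ((p : ℚ) - 1) * (p : ℚ) ^ ((1 : ℤ) - b); 0, (p : ℚ)]) ^ n =
        !![(p : ℚ) ^ (2 * n), (p : ℚ) ^ ((n : ℤ) - b) * ((p : ℚ) ^ n - 1); 0, (p : ℚ) ^ n]) ∧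
    expSet (!![(p : ℚ) ^ 2, ((p : ℚ) - 1) * (p : ℚ) ^ ((1 : ℤ) - b); 0, (p : ℚ)]) =
      {0} ∪ {n : ℕ | b ≤ n} := by
  have hp0 : (p : ℚ) ≠ 0 := by exact_mod_cast hp.ne_zero
  have hpow (n : ℕ) :
      (!![(p : ℚ) ^ 2, ((p : ℚ) - 1) * (p : ℚ) ^ ((1 : ℤ) - b); 0, (p : ℚ)]) ^ n =
        !![(p : ℚ) ^ (2 * n), (p : ℚ) ^ ((n : ℤ) - b) * ((p : ℚ) ^ n - 1); 0, (p : ℚ) ^ n] := by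
    set S := ∑ i ∈ range n, ((p : ℚ) ^ 2) ^ i * p ^ (n - 1 - i)
    have corner : ((p : ℚ) - 1) * (p : ℚ) ^ ((1 : ℤ) - b) * S =
        (p : ℚ) ^ ((n : ℤ) - b) * ((p : ℚ) ^ n - 1) :=
      calc ((p : ℚ) - 1) * (p : ℚ) ^ ((1 : ℤ) - b) * S
          = (p : ℚ) ^ (-(b : ℤ)) * (S * ((p : ℚ) ^ 2 - p)) := by
            rw [sub_eq_add_neg (1 : ℤ), zpow_add₀ hp0, zpow_one]; ring
        _ = (p : ℚ) ^ ((n : ℤ) - b) * ((p : ℚ) ^ n - 1) := by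
            rw [Commute.geom_sum₂_mul (Commute.all _ _), sub_eq_add_neg (n : ℤ), zpow_add₀ hp0,
              zpow_natCast]
            ring
    rw [Matrix.upperTriangular_fin_two_pow, ← pow_mul, corner]
  refine ⟨fun n _ => hpow n, ?_⟩
  ext n
  simp only [expSet, hpow, Fin.forall_fin_two, Matrix.of_apply, Matrix.cons_val', Matrix.cons_val_zero,
    Matrix.cons_val_one, Matrix.cons_val_fin_one, Rat.den_pow, Rat.den_natCast, Rat.den_ofNat, one_pow,
    true_and, and_true, Set.singleton_union, Set.mem_insert_iff, Set.mem_ofPred_eq]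
  rcases eq_or_ne n 0 with rfl | hn
  · simp
  have hpZ : ¬ IsUnit (p : ℤ) := (Nat.prime_iff_prime_int.mp hp).not_isUnit
  rw [show (p : ℚ) ^ n - 1 = ((p ^ n - 1 : ℤ) : ℚ) by push_cast; rfl,
    Rat.den_zpow_mul_intCast_eq_one_iff hp.ne_zero (not_dvd_pow_self_sub_one hpZ hn)]
  omega

theorem ordinary_semigroup_dim_two (b : ℕ) (hb : 2 ≤ b) (p : ℕ) (hp : p.Prime) :
    (∀ n : ℕ, 1 ≤ n →
      (!![(p : ℚ) ^ 2, ((p : ℚ) - 1) * (p : ℚ) ^ ((1 : ℤ) - b); 0, (p : ℚ)]) ^ n =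
        !![(p : ℚ) ^ (2 * n), (p : ℚ) ^ ((n : ℤ) - b) * ((p : ℚ) ^ n - 1); 0, (p : ℚ) ^ n]) ∧
    expSet (!![(p : ℚ) ^ 2, ((p : ℚ) - 1) * (p : ℚ) ^ ((1 : ℤ) - b); 0, (p : ℚ)]) =
      {0} ∪ {n : ℕ | b ≤ n} :=
  ordinary_semigroup_dim_two_general b p hp
end

section
/- Let a, b ≥ 2 be integers, let p be a prime with p ≡ 1 (mod a), and let z be an integer whose multiplicative order modulo p^b equals a. Then the matrix A = [[p·z, p^{1−b}(z−1)],[0, p]] ∈ M₂(ℚ) satisfies S(A) = ⟨a⟩ ∪ {n ∈ ℕ : n ≥ b}; that is, Aⁿ has integer entries if and only if a ∣ n or n ≥ b. -/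
/-- Lifting-the-exponent style lemma: if `p ∣ x - 1` then `p^(k+1) ∣ x^(p^k) - 1`. -/
lemma lte_lite (p : ℕ) (_hp : p.Prime) (x : ℤ) (h : (p : ℤ) ∣ x - 1) (k : ℕ) :
    (p : ℤ) ^ (k + 1) ∣ x ^ p ^ k - 1 := by
  induction k with
  | zero => simpa using h
  | succ k ih =>
    set y : ℤ := x ^ p ^ k with hy
    have hpy : (p : ℤ) ∣ y - 1 := dvd_trans (dvd_pow_self _ (Nat.succ_ne_zero k)) ih
    have hsum : (p : ℤ) ∣ ∑ i ∈ Finset.range p, y ^ i := by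
      have hy1 : (y : ZMod p) = 1 := by
        have := (ZMod.intCast_zmod_eq_zero_iff_dvd (y - 1) p).mpr hpy
        push_cast at this
        linear_combination this
      rw [← ZMod.intCast_zmod_eq_zero_iff_dvd]
      push_cast
      simp [hy1]
    have hfac : (∑ i ∈ Finset.range p, y ^ i) * (y - 1) = y ^ p - 1 := geom_sum_mul y p
    have : x ^ p ^ (k + 1) - 1 = (y - 1) * ∑ i ∈ Finset.range p, y ^ i := by
      rw [pow_succ, pow_mul, ← hy, ← hfac]; ring
    rw [this, pow_succ]
    exact mul_dvd_mul ih hsum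

theorem cyclic_union_ordinary_dim_two (a b : ℕ) (ha : 2 ≤ a) (hb : 2 ≤ b)
    (p : ℕ) (hp : p.Prime) (hp1 : p ≡ 1 [MOD a]) (z : ℤ)
    (hz : orderOf (z : ZMod (p ^ b)) = a) :
    expSet (!![(p : ℚ) * z, (p : ℚ) ^ ((1 : ℤ) - b) * ((z : ℚ) - 1); 0, (p : ℚ)]) =
      {n : ℕ | a ∣ n} ∪ {n : ℕ | b ≤ n} := by
  have hp2 : 2 ≤ p := hp.two_le
  have hq : (p : ℚ) ≠ 0 := Nat.cast_ne_zero.mpr hp.pos.ne'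
  set q : ℚ := (p : ℚ) with hqdef
  -- a ∣ p - 1
  have hap : a ∣ p - 1 := (Nat.modEq_iff_dvd' (by omega)).mp hp1.symm
  have hcop : Nat.Coprime a p := by
    have h1 : a ≤ p - 1 := Nat.le_of_dvd (by omega) hap
    have : ¬ p ∣ a := fun h => by have := Nat.le_of_dvd (by omega) h; omega
    exact Nat.coprime_comm.mp (hp.coprime_iff_not_dvd.mpr this)
  -- a ∣ n ↔ p^b ∣ z^n - 1, one direction each
  have hfwd : ∀ n : ℕ, a ∣ n → (p : ℤ) ^ b ∣ z ^ n - 1 := by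
    intro n hn
    have : ((z : ZMod (p ^ b))) ^ n = 1 := orderOf_dvd_iff_pow_eq_one.mp (hz ▸ hn)
    have h0 : ((z ^ n - 1 : ℤ) : ZMod (p ^ b)) = 0 := by push_cast [this]; ring
    have := (ZMod.intCast_zmod_eq_zero_iff_dvd _ _).mp h0
    exact_mod_cast this
  have hbwd : ∀ n : ℕ, (p : ℤ) ∣ z ^ n - 1 → a ∣ n := by
    intro n hn
    have key : (p : ℤ) ^ b ∣ (z ^ n) ^ p ^ (b - 1) - 1 := by
      have := lte_lite p hp (z ^ n) hn (b - 1)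
      rwa [show b - 1 + 1 = b by omega] at this
    rw [← pow_mul] at key
    have h0 : ((z : ZMod (p ^ b))) ^ (n * p ^ (b - 1)) = 1 := by
      have h0 : ((z ^ (n * p ^ (b - 1)) - 1 : ℤ) : ZMod (p ^ b)) = 0 := by
        rw [ZMod.intCast_zmod_eq_zero_iff_dvd]
        exact_mod_cast key
      push_cast at h0
      linear_combination h0
    have hdvd : a ∣ n * p ^ (b - 1) := hz ▸ orderOf_dvd_of_pow_eq_one h0
    exact (Nat.Coprime.dvd_of_dvd_mul_right (hcop.pow_right _) hdvd)
  -- formula for the n-th power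
  have hpow : ∀ n : ℕ,
      (!![q * z, q ^ ((1 : ℤ) - b) * ((z : ℚ) - 1); 0, q]) ^ n =
      !![(q * z) ^ n, q ^ ((n : ℤ) - b) * ((z : ℚ) ^ n - 1); 0, q ^ n] := by
    intro n
    induction n with
    | zero => simp [Matrix.one_fin_two]
    | succ n ih =>
      rw [pow_succ, ih, Matrix.mul_fin_two]
      have h1 : q ^ n * q ^ ((1 : ℤ) - b) = q ^ (((n : ℤ) + 1) - b) := by
        rw [← zpow_natCast q n, ← zpow_add₀ hq]; congr 1; ring
      have h2 : q ^ ((n : ℤ) - b) * q = q ^ (((n : ℤ) + 1) - b) := by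
        rw [← zpow_add_one₀ hq]; congr 1; ring
      have E00 : (q * (z : ℚ)) ^ n * (q * (z : ℚ)) + q ^ ((n : ℤ) - (b : ℤ)) * ((z : ℚ) ^ n - 1) * 0
          = (q * (z : ℚ)) ^ (n + 1) := by ring
      have E01 : (q * (z : ℚ)) ^ n * (q ^ ((1 : ℤ) - (b : ℤ)) * ((z : ℚ) - 1)) +
            q ^ ((n : ℤ) - (b : ℤ)) * ((z : ℚ) ^ n - 1) * q
          = q ^ (((n + 1 : ℕ) : ℤ) - (b : ℤ)) * ((z : ℚ) ^ (n + 1) - 1) := by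
        push_cast
        push_cast at h1 h2
        linear_combination ((z : ℚ) ^ n * ((z : ℚ) - 1)) * h1 + ((z : ℚ) ^ n - 1) * h2
      have E10 : (0 : ℚ) * (q * (z : ℚ)) + q ^ n * 0 = 0 := by ring
      have E11 : (0 : ℚ) * (q ^ ((1 : ℤ) - (b : ℤ)) * ((z : ℚ) - 1)) + q ^ n * q = q ^ (n + 1) := by
        ring
      rw [E00, E01, E10, E11]
  -- main equivalence
  ext n
  simp only [expSet, Set.mem_setOf_eq, Set.mem_union, hpow n]
  have e00 : ((q * (z : ℚ)) ^ n).den = 1 := by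
    have h : (q * (z : ℚ)) ^ n = (((p * z) ^ n : ℤ) : ℚ) := by push_cast; ring
    rw [h, Rat.den_intCast]
  have e11 : ((q : ℚ) ^ n).den = 1 := by
    have h : (q : ℚ) ^ n = (((p : ℤ) ^ n : ℤ) : ℚ) := by push_cast; ring
    rw [h, Rat.den_intCast]
  have hiff : (∀ i j, ((!![(q * (z : ℚ)) ^ n, q ^ ((n : ℤ) - b) * ((z : ℚ) ^ n - 1); 0, q ^ n] :
      Matrix (Fin 2) (Fin 2) ℚ) i j).den = 1) ↔
      (q ^ ((n : ℤ) - b) * ((z : ℚ) ^ n - 1)).den = 1 := by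
    constructor
    · intro h
      have := h 0 1
      simpa using this
    · intro h i j
      fin_cases i <;> fin_cases j
      · simpa using e00
      · simpa using h
      · simp
      · simpa using e11
  rw [hiff]
  constructor
  · intro hd
    by_cases hnb : b ≤ n
    · exact Or.inr hnb
    · left
      rw [Rat.den_eq_one_iff] at hd
      set x : ℚ := q ^ ((n : ℤ) - b) * ((z : ℚ) ^ n - 1) with hx
      obtain ⟨m, hm⟩ : ∃ m : ℤ, x = (m : ℚ) := ⟨x.num, hd.symm⟩
      have hcancel : q ^ ((n : ℤ) - b) * q ^ ((b - n : ℕ) : ℤ) = 1 := by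
        rw [← zpow_add₀ hq]
        have he : (n : ℤ) - b + ((b - n : ℕ) : ℤ) = 0 := by
          have : ((b - n : ℕ) : ℤ) = (b : ℤ) - n := by omega
          omega
        rw [he, zpow_zero]
      have hz1 : ((z : ℚ) ^ n - 1) = (m : ℚ) * q ^ ((b - n : ℕ) : ℤ) := by
        calc ((z : ℚ) ^ n - 1)
            = q ^ ((n : ℤ) - b) * ((z : ℚ) ^ n - 1) * q ^ ((b - n : ℕ) : ℤ) := by
              rw [mul_comm (q ^ ((n : ℤ) - b)), mul_assoc, hcancel, mul_one]
          _ = (m : ℚ) * q ^ ((b - n : ℕ) : ℤ) := by rw [← hx, hm]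
      rw [zpow_natCast] at hz1
      have hint : z ^ n - 1 = m * (p : ℤ) ^ (b - n) := by
        have : ((z ^ n - 1 : ℤ) : ℚ) = ((m * (p : ℤ) ^ (b - n) : ℤ) : ℚ) := by
          push_cast
          linarith [hz1]
        exact_mod_cast this
      apply hbwd n
      rw [hint]
      exact Dvd.dvd.mul_left (dvd_pow_self (p : ℤ) (by omega)) m
  · intro h
    rcases h with h | h
    · -- a ∣ n : p^b divides z^n - 1
      obtain ⟨t, ht⟩ := hfwd n h
      have heq : q ^ ((n : ℤ) - b) * ((z : ℚ) ^ n - 1) = (((p : ℤ) ^ n * t : ℤ) : ℚ) := by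
        have h2 : ((z : ℚ)) ^ n - 1 = q ^ b * (t : ℚ) := by
          have h3 := congrArg (fun w : ℤ => (w : ℚ)) ht
          push_cast at h3
          exact h3
        rw [h2, ← mul_assoc, ← zpow_natCast q b, ← zpow_add₀ hq]
        rw [show (n : ℤ) - (b : ℤ) + (b : ℤ) = (n : ℤ) by ring, zpow_natCast]
        push_cast
        ring
      rw [heq, Rat.den_intCast]
    · -- b ≤ n
      have heq : q ^ ((n : ℤ) - b) * ((z : ℚ) ^ n - 1)
          = (((p : ℤ) ^ (n - b) * (z ^ n - 1) : ℤ) : ℚ) := by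
        have he : (n : ℤ) - b = ((n - b : ℕ) : ℤ) := by omega
        rw [he, zpow_natCast]
        push_cast
        ring
      rw [heq, Rat.den_intCast]
end

section
/- The numerical semigroup S = ⟨30, 31, 36, 40, 45, 46, 51, 55, 65⟩ equals the intersection ⟨2, 31⟩ ∩ ⟨3, 31⟩ ∩ ⟨5, 31⟩. -/
namespace SemigroupAux

def gens : List ℕ := [30, 31, 36, 40, 45, 46, 51, 55, 65]

def tbl : ℕ → List Bool
  | 0 => [true]
  | n+1 => (gens.any fun g => (tbl n).getD (g-1) false) :: tbl n

lemma tbl_length (n : ℕ) : (tbl n).length = n + 1 := by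
  induction n with
  | zero => rfl
  | succ n ih => simp [tbl, ih]

lemma gens_mem_closure {g : ℕ} (hg : g ∈ gens) :
    g ∈ AddSubmonoid.closure ({30, 31, 36, 40, 45, 46, 51, 55, 65} : Set ℕ) := by
  apply AddSubmonoid.subset_closure
  fin_cases hg <;> simp

lemma tbl_sound (n : ℕ) : ∀ i ≤ n, (tbl n).getD i false = true →
    (n - i) ∈ AddSubmonoid.closure ({30, 31, 36, 40, 45, 46, 51, 55, 65} : Set ℕ) := by
  induction n with
  | zero =>
    intro i hi _
    interval_cases i
    simpa using AddSubmonoid.zero_mem _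
  | succ n ih =>
    intro i hi h
    match i with
    | 0 =>
      simp only [tbl, List.getD_cons_zero] at h
      rw [List.any_eq_true] at h
      obtain ⟨g, hg, hgt⟩ := h
      have hgle : g - 1 ≤ n := by
        by_contra hlt
        push_neg at hlt
        rw [List.getD_eq_default] at hgt
        · exact absurd hgt (by simp)
        · rw [tbl_length]; omega
      have hmem := ih (g - 1) hgle hgt
      have hg1 : 1 ≤ g := by fin_cases hg <;> norm_num
      have heq : n + 1 - 0 = g + (n - (g - 1)) := by omega
      rw [heq]
      exact AddSubmonoid.add_mem _ (gens_mem_closure hg) hmem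
    | j+1 =>
      simp only [tbl, List.getD_cons_succ] at h
      have := ih j (by omega) h
      have heq : n + 1 - (j + 1) = n - j := by omega
      rw [heq]
      exact this

lemma char2 (n : ℕ) : n ∈ AddSubmonoid.closure ({2, 31} : Set ℕ) ↔ 31 * (n % 2) ≤ n := by
  rw [AddSubmonoid.mem_closure_pair]
  constructor
  · rintro ⟨a, b, rfl⟩
    simp only [smul_eq_mul]
    have hb : (a * 2 + b * 31) % 2 = b % 2 := by omega
    omega
  · intro h
    exact ⟨(n - 31 * (n % 2)) / 2, n % 2, by simp only [smul_eq_mul]; omega⟩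

lemma char3 (n : ℕ) : n ∈ AddSubmonoid.closure ({3, 31} : Set ℕ) ↔ 31 * (n % 3) ≤ n := by
  rw [AddSubmonoid.mem_closure_pair]
  constructor
  · rintro ⟨a, b, rfl⟩
    simp only [smul_eq_mul]
    have hb : (a * 3 + b * 31) % 3 = b % 3 := by omega
    omega
  · intro h
    exact ⟨(n - 31 * (n % 3)) / 3, n % 3, by simp only [smul_eq_mul]; omega⟩

lemma char5 (n : ℕ) : n ∈ AddSubmonoid.closure ({5, 31} : Set ℕ) ↔ 31 * (n % 5) ≤ n := by
  rw [AddSubmonoid.mem_closure_pair]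
  constructor
  · rintro ⟨a, b, rfl⟩
    simp only [smul_eq_mul]
    have hb : (a * 5 + b * 31) % 5 = b % 5 := by omega
    omega
  · intro h
    exact ⟨(n - 31 * (n % 5)) / 5, n % 5, by simp only [smul_eq_mul]; omega⟩

set_option maxRecDepth 10000 in
lemma small_check : ∀ n < 870,
    (31 * (n % 2) ≤ n ∧ 31 * (n % 3) ≤ n ∧ 31 * (n % 5) ≤ n) →
    (tbl n).getD 0 false = true := by decide

lemma large_mem {n : ℕ} (hn : 870 ≤ n) :
    n ∈ AddSubmonoid.closure ({30, 31, 36, 40, 45, 46, 51, 55, 65} : Set ℕ) := by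
  have h30 : (30 : ℕ) ∈ AddSubmonoid.closure ({30, 31, 36, 40, 45, 46, 51, 55, 65} : Set ℕ) :=
    AddSubmonoid.subset_closure (by simp)
  have h31 : (31 : ℕ) ∈ AddSubmonoid.closure ({30, 31, 36, 40, 45, 46, 51, 55, 65} : Set ℕ) :=
    AddSubmonoid.subset_closure (by simp)
  have hmem := AddSubmonoid.add_mem _ (AddSubmonoid.nsmul_mem _ h31 (n % 30))
    (AddSubmonoid.nsmul_mem _ h30 (n / 30 - n % 30))
  have heq : (n % 30) • (31 : ℕ) + (n / 30 - n % 30) • (30 : ℕ) = n := by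
    simp only [smul_eq_mul]; omega
  rwa [heq] at hmem

end SemigroupAux

open SemigroupAux
theorem semigroup_intersection_eq :
    (AddSubmonoid.closure {30, 31, 36, 40, 45, 46, 51, 55, 65} : Set ℕ) =
      (AddSubmonoid.closure {2, 31} : Set ℕ) ∩
      (AddSubmonoid.closure {3, 31} : Set ℕ) ∩
      (AddSubmonoid.closure {5, 31} : Set ℕ) := by
  ext n
  simp only [Set.mem_inter_iff, SetLike.mem_coe, char2, char3, char5]
  constructor
  · intro hn
    have hsub : AddSubmonoid.closure ({30, 31, 36, 40, 45, 46, 51, 55, 65} : Set ℕ) ≤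
        (AddSubmonoid.closure ({2, 31} : Set ℕ)) ⊓ (AddSubmonoid.closure ({3, 31} : Set ℕ)) ⊓
          (AddSubmonoid.closure ({5, 31} : Set ℕ)) := by
      rw [AddSubmonoid.closure_le]
      intro x hx
      simp only [Set.mem_insert_iff, Set.mem_singleton_iff] at hx
      simp only [AddSubmonoid.coe_inf, Set.mem_inter_iff, SetLike.mem_coe, char2, char3, char5]
      rcases hx with rfl | rfl | rfl | rfl | rfl | rfl | rfl | rfl | rfl <;> norm_num
    have := hsub hn
    simp only [AddSubmonoid.mem_inf, char2, char3, char5] at this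
    exact this
  · rintro ⟨⟨h2, h3⟩, h5⟩
    by_cases hlt : n < 870
    · have := small_check n hlt ⟨h2, h3, h5⟩
      have := tbl_sound n 0 (Nat.zero_le n) this
      simpa using this
    · exact large_mem (by omega)
end

section
/- Suppose A ∈ M₃(ℚ) with S(A) = ⟨5,6,8⟩ = {0,5,6,8,10,11,12,13,14,…} and suppose the characteristic polynomial of A is x³ + p x² + q x + r with p, q, r ∈ ℤ. Then r ≠ 0. -/
/-! If `r = 0`, Cayley–Hamilton multiplied by `A ^ 4` writes `A ^ 7` as an integer combination of
`A ^ 6` and `A ^ 5`, so `7` would lie in the exponent set. -/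

section expSet

open Polynomial

variable {ι : Type*} [Fintype ι] [DecidableEq ι]

theorem mem_expSet_iff_mem_range_mapMatrix (A : Matrix ι ι ℚ) (n : ℕ) :
    n ∈ expSet A ↔ A ^ n ∈ (Int.castRingHom ℚ).mapMatrix.range := by
  constructor
  · intro h
    refine ⟨fun i j => ((A ^ n) i j).num, ?_⟩
    ext i j
    exact (Rat.den_eq_one_iff _).1 (h i j)
  · rintro ⟨B, hB⟩ i j
    simp [← hB]

theorem add_natDegree_mem_expSet (A : Matrix ι ι ℚ) {P : ℤ[X]} (hP : P.Monic)
    (hA : aeval A P = 0) (h0 : P.coeff 0 = 0) (k : ℕ)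
    (hk : ∀ i, k < i → i < k + P.natDegree → i ∈ expSet A) :
    k + P.natDegree ∈ expSet A := by
  set d := P.natDegree
  have hrel : A ^ (k + d) = -∑ i ∈ Finset.range d, P.coeff i • A ^ (k + i) := by
    have h := congrArg (A ^ k * ·) hA
    rw [hP.as_sum] at h
    simp only [map_add, map_sum, map_mul, map_pow, aeval_X, aeval_C, mul_add, Finset.mul_sum,
      mul_zero, ← Algebra.smul_def, mul_smul_comm, ← pow_add] at h
    exact eq_neg_of_add_eq_zero_left h
  rw [mem_expSet_iff_mem_range_mapMatrix, hrel]
  refine neg_mem (Subring.sum_mem _ fun i hi => ?_)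
  rcases Nat.eq_zero_or_pos i with rfl | hi0
  · simp [h0]
  · have hid : i < d := Finset.mem_range.1 hi
    refine Subring.zsmul_mem _ ?_ _
    exact (mem_expSet_iff_mem_range_mapMatrix A _).1 (hk _ (by omega) (by omega))

end expSet

theorem seven_not_mem_closure_five_six_eight :
    (7 : ℕ) ∉ AddSubmonoid.closure ({5, 6, 8} : Set ℕ) := by
  suffices h : ∀ n ∈ AddSubmonoid.closure ({5, 6, 8} : Set ℕ),
      n = 0 ∨ n = 5 ∨ n = 6 ∨ n = 8 ∨ 10 ≤ n by
    intro h7; have := h 7 h7; omega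
  intro n hn
  induction hn using AddSubmonoid.closure_induction with
  | mem x hx => simp only [Set.mem_insert_iff, Set.mem_singleton_iff] at hx; omega
  | zero => left; rfl
  | add _ _ _ _ _ _ => omega

open Polynomial in
theorem charpoly_r_ne_zero (A : Matrix (Fin 3) (Fin 3) ℚ)
    (hS : expSet A = (AddSubmonoid.closure {5, 6, 8} : Set ℕ)) (p q r : ℤ)
    (hchar : A.charpoly = X ^ 3 + C (p : ℚ) * X ^ 2 + C (q : ℚ) * X + C (r : ℚ)) :
    r ≠ 0 := by
  rintro rfl
  set P : ℤ[X] := X ^ 3 + C p * X ^ 2 + C q * X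
  have hPmonic : P.Monic := by unfold P; monicity!
  have hPdeg : P.natDegree = 3 := by unfold P; compute_degree!
  have hPA : aeval A P = 0 := by
    have h := Matrix.aeval_self_charpoly A
    rw [hchar] at h
    simpa [P] using h
  have h7 : 4 + P.natDegree ∈ expSet A := by
    refine add_natDegree_mem_expSet A hPmonic hPA (by simp [P]) 4 fun i hi hi' => ?_
    rw [hPdeg] at hi'
    rw [hS]
    obtain rfl | rfl : i = 5 ∨ i = 6 := by omega
    all_goals exact AddSubmonoid.subset_closure (by simp)
  rw [hPdeg, hS] at h7
  exact seven_not_mem_closure_five_six_eight h7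
end

section
/- Suppose A ∈ M₃(ℚ) with S(A) = ⟨5,6,8⟩ and characteristic polynomial x³ + p x² + q x + r with integer coefficients. Then q ≠ 0. -/
/-- The numerical semigroup `{0,5,6,8} ∪ [10,∞)` as an additive submonoid of `ℕ`. -/
def numSg : AddSubmonoid ℕ where
  carrier := {n | n = 0 ∨ n = 5 ∨ n = 6 ∨ n = 8 ∨ 10 ≤ n}
  zero_mem' := by left; rfl
  add_mem' := by intro a b ha hb; simp only [Set.mem_setOf_eq] at *; omega

lemma nine_not_mem : (9 : ℕ) ∉ AddSubmonoid.closure ({5, 6, 8} : Set ℕ) := by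
  intro h
  have hle : AddSubmonoid.closure ({5, 6, 8} : Set ℕ) ≤ numSg := by
    rw [AddSubmonoid.closure_le]
    intro x hx
    simp only [Set.mem_insert_iff, Set.mem_singleton_iff] at hx
    rcases hx with rfl | rfl | rfl <;> simp [numSg]
  have := hle h
  simp only [numSg, AddSubmonoid.mem_mk, AddSubsemigroup.mem_mk, Set.mem_setOf_eq] at this
  omega

open Polynomial in
theorem charpoly_q_ne_zero (A : Matrix (Fin 3) (Fin 3) ℚ)
    (hS : expSet A = (AddSubmonoid.closure {5, 6, 8} : Set ℕ)) (p q r : ℤ)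
    (hchar : A.charpoly = X ^ 3 + C (p : ℚ) * X ^ 2 + C (q : ℚ) * X + C (r : ℚ)) :
    q ≠ 0 := by
  intro hq
  subst hq
  -- Cayley–Hamilton
  have hCH := A.aeval_self_charpoly
  rw [hchar] at hCH
  simp only [map_add, map_mul, aeval_X_pow, aeval_C, aeval_X, Int.cast_zero, map_zero,
    zero_mul, add_zero] at hCH
  -- A^9 = -(p • A^8 + r • A^6)
  have h9 : A ^ 9 = -(algebraMap ℚ _ (p : ℚ) * A ^ 8 + algebraMap ℚ _ (r : ℚ) * A ^ 6) := by
    have : A ^ 3 + algebraMap ℚ _ (p : ℚ) * A ^ 2 + algebraMap ℚ _ (r : ℚ) = 0 := hCH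
    have h3 : A ^ 3 = -(algebraMap ℚ _ (p : ℚ) * A ^ 2 + algebraMap ℚ _ (r : ℚ)) := by
      apply eq_neg_of_add_eq_zero_left
      rw [← add_assoc]
      exact this
    calc A ^ 9 = A ^ 3 * A ^ 6 := by rw [← pow_add]
      _ = -(algebraMap ℚ _ (p : ℚ) * A ^ 2 + algebraMap ℚ _ (r : ℚ)) * A ^ 6 := by rw [h3]
      _ = -(algebraMap ℚ _ (p : ℚ) * A ^ 8 + algebraMap ℚ _ (r : ℚ) * A ^ 6) := by
          rw [neg_mul, add_mul, mul_assoc, ← pow_add]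
  have h6 : (6 : ℕ) ∈ expSet A := by
    rw [hS]
    exact AddSubmonoid.subset_closure (by simp)
  have h8 : (8 : ℕ) ∈ expSet A := by
    rw [hS]
    exact AddSubmonoid.subset_closure (by simp)
  have h9mem : (9 : ℕ) ∈ expSet A := by
    intro i j
    have e8 := h8 i j
    have e6 := h6 i j
    rw [Rat.den_eq_one_iff] at e8 e6
    have : (A ^ 9) i j = ((-(p * ((A ^ 8) i j).num + r * ((A ^ 6) i j).num) : ℤ) : ℚ) := by
      rw [h9]
      simp only [Matrix.neg_apply, Matrix.add_apply]
      rw [Algebra.algebraMap_eq_smul_one, Algebra.algebraMap_eq_smul_one]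
      rw [Matrix.smul_mul, Matrix.smul_mul, one_mul, one_mul]
      simp only [Matrix.smul_apply, smul_eq_mul]
      push_cast
      rw [e8, e6]
    rw [this, Rat.den_intCast]
  rw [hS] at h9mem
  exact nine_not_mem h9mem
end

section
/- Suppose A ∈ M₃(ℚ) with S(A) = ⟨5,6,8⟩ and characteristic polynomial x³ + p x² + q x + r with p, q, r ∈ ℤ. Then gcd(q, r) ≥ 2. -/
lemma den_one_iff' (x : ℚ) : x.den = 1 ↔ ∃ z : ℤ, x = z := by
  constructor
  · intro h; exact ⟨x.num, by exact_mod_cast (Rat.den_eq_one_iff x).mp h |>.symm⟩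
  · rintro ⟨z, rfl⟩; simp [Rat.den_intCast]

lemma nine_not_mem_closure : (9:ℕ) ∉ (AddSubmonoid.closure ({5, 6, 8} : Set ℕ) : Set ℕ) := by
  intro h
  have key : ∃ a b c : ℕ, (9:ℕ) = 5*a + 6*b + 8*c := by
    refine AddSubmonoid.closure_induction ?_ ?_ ?_ h
    · rintro x (rfl | rfl | rfl)
      exacts [⟨1,0,0, by ring⟩, ⟨0,1,0, by ring⟩, ⟨0,0,1, by ring⟩]
    · exact ⟨0,0,0, by ring⟩
    · rintro x y - - ⟨a,b,c,rfl⟩ ⟨a',b',c',rfl⟩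
      exact ⟨a+a', b+b', c+c', by ring⟩
  obtain ⟨a,b,c,habc⟩ := key
  omega

open Polynomial in
theorem charpoly_gcd_ge_two (A : Matrix (Fin 3) (Fin 3) ℚ)
    (hS : expSet A = (AddSubmonoid.closure {5, 6, 8} : Set ℕ)) (p q r : ℤ)
    (hchar : A.charpoly = X ^ 3 + C (p : ℚ) * X ^ 2 + C (q : ℚ) * X + C (r : ℚ)) :
    2 ≤ Int.gcd q r := by
  -- Cayley–Hamilton
  have hCH : A^3 + (p:ℚ)•A^2 + (q:ℚ)•A + (r:ℚ)•1 = 0 := by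
    have h := Matrix.aeval_self_charpoly A
    rw [hchar] at h
    simp only [map_add, map_mul, map_pow, aeval_X, aeval_C,
      Algebra.algebraMap_eq_smul_one, smul_mul_assoc, one_mul, mul_one] at h
    exact h
  -- entrywise consequence for each m
  have hE : ∀ (m : ℕ) (i j : Fin 3),
      (A^(m+3)) i j + (p:ℚ) * (A^(m+2)) i j + (q:ℚ) * (A^(m+1)) i j
        + (r:ℚ) * (A^m) i j = 0 := by
    intro m i j
    have h2 : (A^3 + (p:ℚ)•A^2 + (q:ℚ)•A + (r:ℚ)•1) * A^m = 0 := by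
      rw [hCH, zero_mul]
    have h3 : A^(m+3) + (p:ℚ)•A^(m+2) + (q:ℚ)•A^(m+1) + (r:ℚ)•A^m = 0 := by
      rw [add_mul, add_mul, add_mul, smul_mul_assoc, smul_mul_assoc, smul_mul_assoc,
        one_mul, ← pow_add, ← pow_add] at h2
      simpa [← pow_succ', Nat.add_comm m 3, Nat.add_comm m 2] using h2
    have := congrFun (congrFun h3 i) j
    simpa [Matrix.add_apply, Matrix.smul_apply, smul_eq_mul] using this
  -- integral powers from hS
  have hmem : ∀ n : ℕ, n ∈ (AddSubmonoid.closure ({5, 6, 8} : Set ℕ)) →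
      ∀ i j, ∃ z : ℤ, (A^n) i j = z := by
    intro n hn i j
    have : n ∈ expSet A := by rw [hS]; exact hn
    exact (den_one_iff' _).mp (this i j)
  have h5 : (5:ℕ) ∈ AddSubmonoid.closure ({5, 6, 8} : Set ℕ) :=
    AddSubmonoid.subset_closure (by simp)
  have h6 : (6:ℕ) ∈ AddSubmonoid.closure ({5, 6, 8} : Set ℕ) :=
    AddSubmonoid.subset_closure (by simp)
  have h8 : (8:ℕ) ∈ AddSubmonoid.closure ({5, 6, 8} : Set ℕ) :=
    AddSubmonoid.subset_closure (by simp)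
  have h10 : (10:ℕ) ∈ AddSubmonoid.closure ({5, 6, 8} : Set ℕ) := by
    have := AddSubmonoid.add_mem _ h5 h5; simpa using this
  have h11 : (11:ℕ) ∈ AddSubmonoid.closure ({5, 6, 8} : Set ℕ) := by
    have := AddSubmonoid.add_mem _ h5 h6; simpa using this
  have h12 : (12:ℕ) ∈ AddSubmonoid.closure ({5, 6, 8} : Set ℕ) := by
    have := AddSubmonoid.add_mem _ h6 h6; simpa using this
  -- main argument: show A^9 is integral if gcd q r ≤ 1, contradiction with 9 ∉ closure
  by_contra hlt
  push_neg at hlt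
  interval_cases hg : Int.gcd q r
  · -- gcd = 0 : q = r = 0
    obtain ⟨hq0, hr0⟩ := Int.gcd_eq_zero_iff.mp hg
    subst hq0; subst hr0
    apply nine_not_mem_closure
    rw [← hS]
    intro i j
    obtain ⟨z8, hz8⟩ := hmem 8 h8 i j
    have e := hE 6 i j
    rw [den_one_iff']
    refine ⟨-(p * z8), ?_⟩
    have : (A^9) i j = -((p:ℚ) * (A^8) i j) := by
      have e' := e; norm_num at e' ⊢; linarith
    rw [this, hz8]; push_cast; ring
  · -- gcd = 1
    apply nine_not_mem_closure
    rw [← hS]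
    intro i j
    obtain ⟨z8, hz8⟩ := hmem 8 h8 i j
    obtain ⟨z10, hz10⟩ := hmem 10 h10 i j
    obtain ⟨z11, hz11⟩ := hmem 11 h11 i j
    obtain ⟨z12, hz12⟩ := hmem 12 h12 i j
    set x : ℚ := (A^9) i j with hx
    have e8 := hE 8 i j
    have e9 := hE 9 i j
    norm_num at e8 e9
    rw [hz8, hz10, hz11] at e8
    rw [hz10, hz11, hz12] at e9
    -- q * x and r * x are integers
    have hq : (q:ℚ) * x = ((-(z11 + p * z10 + r * z8) : ℤ) : ℚ) := by
      push_cast; linarith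
    have hr : (r:ℚ) * x = ((-(z12 + p * z11 + q * z10) : ℤ) : ℚ) := by
      push_cast; linarith
    -- Bezout
    have hbez : (1 : ℤ) = q * Int.gcdA q r + r * Int.gcdB q r := by
      have := Int.gcd_eq_gcd_ab q r
      rw [hg] at this; exact_mod_cast this
    rw [den_one_iff']
    refine ⟨Int.gcdA q r * (-(z11 + p * z10 + r * z8))
      + Int.gcdB q r * (-(z12 + p * z11 + q * z10)), ?_⟩
    have : x = (Int.gcdA q r : ℚ) * ((q:ℚ) * x) + (Int.gcdB q r : ℚ) * ((r:ℚ) * x) := by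
      have hb : (1:ℚ) = (q:ℚ) * (Int.gcdA q r : ℚ) + (r:ℚ) * (Int.gcdB q r : ℚ) := by
        exact_mod_cast hbez
      calc x = 1 * x := (one_mul x).symm
        _ = ((q:ℚ) * (Int.gcdA q r : ℚ) + (r:ℚ) * (Int.gcdB q r : ℚ)) * x := by rw [← hb]
        _ = (Int.gcdA q r : ℚ) * ((q:ℚ) * x) + (Int.gcdB q r : ℚ) * ((r:ℚ) * x) := by ring
    rw [this, hq, hr]; push_cast; ring
end

section
/- Let A = [[0, 32],[1/16, 8]] ∈ M₂(ℚ). Then Aⁿ has integer entries if and only if n belongs to the numerical semigroup ⟨4, 6, 9, 11⟩ = {0, 4, 6, 8, 9, 10} ∪ {n : n ≥ 12}. -/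
def lucasU (t s : ℤ) : ℕ → ℤ
  | 0 => 0
  | 1 => 1
  | n + 2 => t * lucasU t s (n + 1) + s * lucasU t s n

theorem pow_succ_eq_lucasU {R : Type*} [Ring R] {a : R} {t s : ℤ}
    (ha : a ^ 2 = t • a + s • 1) (n : ℕ) :
    a ^ (n + 1) = lucasU t s (n + 1) • a + (s * lucasU t s n) • 1 := by
  induction n with
  | zero => simp [lucasU]
  | succ n ih =>
    rw [pow_succ, ih, add_mul, smul_mul_assoc, smul_mul_assoc, one_mul, ← sq, ha, lucasU]
    module

theorem Rat.den_eq_one_iff_mem_range (x : ℚ) : x.den = 1 ↔ x ∈ (Int.castRingHom ℚ).range :=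
  ⟨fun h => ⟨x.num, (Rat.den_eq_one_iff x).1 h⟩, by rintro ⟨z, rfl⟩; exact Rat.den_intCast z⟩

def expSubmonoid {ι : Type*} [Fintype ι] [DecidableEq ι] (A : Matrix ι ι ℚ) : AddSubmonoid ℕ where
  carrier := expSet A
  zero_mem' i j := by
    rw [pow_zero, Matrix.one_apply]
    split_ifs <;> rfl
  add_mem' {m n} hm hn i j := by
    rw [Rat.den_eq_one_iff_mem_range, pow_add, Matrix.mul_apply]
    exact Subring.sum_mem _ fun k _ => Subring.mul_mem _
      ((Rat.den_eq_one_iff_mem_range _).1 (hm i k)) ((Rat.den_eq_one_iff_mem_range _).1 (hn k j))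

theorem sq_explicit_matrix :
    (!![(0 : ℚ), 32; 1/16, 8]) ^ 2 = (8 : ℤ) • !![(0 : ℚ), 32; 1/16, 8] + (2 : ℤ) • 1 := by
  rw [sq, Matrix.mul_fin_two, Matrix.one_fin_two]
  ext i j; fin_cases i <;> fin_cases j <;> norm_num

theorem explicit_matrix_pow_succ (n : ℕ) :
    (!![(0 : ℚ), 32; 1/16, 8]) ^ (n + 1) =
      !![((2 * lucasU 8 2 n : ℤ) : ℚ), ((32 * lucasU 8 2 (n + 1) : ℤ) : ℚ);
        ((lucasU 8 2 (n + 1) : ℤ) : ℚ) / (16 : ℤ),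
        ((8 * lucasU 8 2 (n + 1) + 2 * lucasU 8 2 n : ℤ) : ℚ)] := by
  rw [pow_succ_eq_lucasU sq_explicit_matrix, Matrix.one_fin_two]
  ext i j; fin_cases i <;> fin_cases j <;> simp <;> ring

theorem mem_expSet_explicit_matrix_iff (n : ℕ) :
    n ∈ expSet (!![(0 : ℚ), 32; 1/16, 8]) ↔ 16 ∣ lucasU 8 2 n := by
  cases n with
  | zero => exact ⟨fun _ => dvd_zero 16, fun _ => (expSubmonoid _).zero_mem⟩
  | succ n =>
    rw [expSet, Set.mem_ofPred_eq, explicit_matrix_pow_succ]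
    simp only [Fin.forall_fin_two, Matrix.of_apply, Matrix.cons_val_zero, Matrix.cons_val_one,
      Rat.den_intCast,
      Rat.den_div_intCast_eq_one_iff _ _ (by norm_num : (16 : ℤ) ≠ 0), true_and, and_true]

theorem mem_closure_of_notMem_gaps {n : ℕ} (hn : n ∉ ({1, 2, 3, 5, 7} : Finset ℕ)) :
    n ∈ AddSubmonoid.closure ({4, 6, 9, 11} : Set ℕ) := by
  induction n using Nat.strong_induction_on with
  | _ n ih =>
    have mem {k : ℕ} (hk : k ∈ ({4, 6, 9, 11} : Set ℕ)) := AddSubmonoid.subset_closure hk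
    rcases lt_or_ge n 12 with hn12 | hn12
    · interval_cases n <;> simp at hn
      · exact zero_mem _
      · exact mem (by simp)
      · exact mem (by simp)
      · exact add_mem (mem (by simp)) (mem (by simp) : 4 ∈ _)
      · exact mem (by simp)
      · exact add_mem (mem (by simp)) (mem (by simp) : 6 ∈ _)
      · exact mem (by simp)
    · obtain ⟨m, rfl⟩ : ∃ m, n = m + 4 := ⟨n - 4, by omega⟩
      exact add_mem (ih m (by omega) (by simp; omega)) (mem (by simp))

theorem expSet_explicit_matrix :
    expSet (!![(0 : ℚ), 32; 1/16, 8]) =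
      (AddSubmonoid.closure {4, 6, 9, 11} : Set ℕ) := by
  refine Set.Subset.antisymm (fun n hn => mem_closure_of_notMem_gaps fun hgap => ?_) ?_
  · have gaps : ∀ k ∈ ({1, 2, 3, 5, 7} : Finset ℕ), ¬ 16 ∣ lucasU 8 2 k := by decide
    exact gaps n hgap ((mem_expSet_explicit_matrix_iff n).1 hn)
  · have gens : ∀ k ∈ ({4, 6, 9, 11} : Finset ℕ), 16 ∣ lucasU 8 2 k := by decide
    refine AddSubmonoid.closure_le (S := expSubmonoid _).2 fun k hk => ?_
    exact (mem_expSet_explicit_matrix_iff k).2 (gens k (by simpa using hk))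
end
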